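/- arXiv:1911.01546 — 2 statements merged into one kernel-verified Lean document; each statement's English description precedes it below -/
import Mathlib

section
/- Let F and G be CDFs of nonnegative bounded random variables, α ∈ (0,1], and suppose ν_F = F⁻¹(α) and ν_G = G⁻¹(α) are maximizers in the CVaR variational formula for F and G respectively. Then |CVaR_α(F) - CVaR_α(G)| ≤ (1/α) ∫₀^{max(ν_F, ν_G)} |G(y) - F(y)| dy. -/
open MeasureTheory

/-- A CDF of a nonnegative bounded random variable, as a function. -/
def IsBoundedNonnegCDF (F : ℝ → ℝ) : Prop :=
  Monotone F ∧ (∀ x, F x ∈ Set.Icc (0:ℝ) 1) ∧ (∀ x < 0, F x = 0) ∧ ∃ B : ℝ, ∀ x ≥ B, F x = 1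

/-- Conditional value at risk via the Rockafellar–Uryasev variational formula,
using `E[(ν - X)⁺] = ∫₀^ν F(y) dy` for nonnegative variables. -/
noncomputable def cvar (α : ℝ) (F : ℝ → ℝ) : ℝ :=
  ⨆ ν : ℝ, (ν - α⁻¹ * ∫ y in (0:ℝ)..ν, F y)

/-! Each CVaR dominates its objective at the other's maximizer, so
`CVaR_α(G) - CVaR_α(F) ≤ α⁻¹ ∫₀^{ν_G} (F - G) ≤ α⁻¹ ∫₀^{max ν_F ν_G} |G - F|`, and symmetrically.
The only analytic input is that the supremum is finite: the objective is at most
`ν - ∫₀^ν F`, which stays bounded because `F = 1` eventually. -/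

namespace IsBoundedNonnegCDF

variable {F : ℝ → ℝ}

theorem intervalIntegrable (hF : IsBoundedNonnegCDF F) (a b : ℝ) :
    IntervalIntegrable F volume a b :=
  hF.1.intervalIntegrable

theorem integral_nonneg (hF : IsBoundedNonnegCDF F) (ν : ℝ) :
    0 ≤ ∫ y in (0:ℝ)..ν, F y := by
  rcases le_or_gt 0 ν with hν | hν
  · exact intervalIntegral.integral_nonneg hν fun y _ => (hF.2.1 y).1
  · have hzero : ∫ y in ν..(0:ℝ), F y = ∫ _ in ν..(0:ℝ), (0:ℝ) :=
      intervalIntegral.integral_congr_Ioo_of_le hν.le fun y hy => hF.2.2.1 y hy.2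
    rw [intervalIntegral.integral_symm, hzero]
    simp

theorem exists_sub_le_integral (hF : IsBoundedNonnegCDF F) :
    ∃ C, ∀ ν, ν - C ≤ ∫ y in (0:ℝ)..ν, F y := by
  obtain ⟨B, hB⟩ := hF.2.2.2
  refine ⟨max B 0, fun ν => ?_⟩
  rcases le_or_gt ν (max B 0) with hν | hν
  · linarith [hF.integral_nonneg ν]
  · have htail : ∫ y in (max B 0)..ν, F y = ν - max B 0 := by
      rw [intervalIntegral.integral_congr fun y hy => hB y ?_]
      · simp
      · rw [Set.uIcc_of_le hν.le] at hy
        exact (le_max_left B 0).trans hy.1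
    rw [← intervalIntegral.integral_add_adjacent_intervals (hF.intervalIntegrable 0 (max B 0))
      (hF.intervalIntegrable _ ν), htail]
    linarith [hF.integral_nonneg (max B 0)]

end IsBoundedNonnegCDF

section cvar

variable {F G : ℝ → ℝ} {α : ℝ}

theorem cvar_bddAbove (hF : IsBoundedNonnegCDF F) (hα : α ∈ Set.Ioc (0:ℝ) 1) :
    BddAbove (Set.range fun ν : ℝ => ν - α⁻¹ * ∫ y in (0:ℝ)..ν, F y) := by
  obtain ⟨C, hC⟩ := hF.exists_sub_le_integral
  have hα1 : 1 ≤ α⁻¹ := one_le_inv₀ hα.1 |>.2 hα.2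
  refine ⟨C, ?_⟩
  rintro _ ⟨ν, rfl⟩
  nlinarith [hC ν, hF.integral_nonneg ν]

theorem le_cvar (hF : IsBoundedNonnegCDF F) (hα : α ∈ Set.Ioc (0:ℝ) 1) (ν : ℝ) :
    ν - α⁻¹ * ∫ y in (0:ℝ)..ν, F y ≤ cvar α F :=
  le_ciSup (cvar_bddAbove hF hα) ν

theorem cvar_sub_cvar_le (hF : IsBoundedNonnegCDF F) (hG : IsBoundedNonnegCDF G)
    (hα : α ∈ Set.Ioc (0:ℝ) 1) {νG ν : ℝ} (hνG0 : 0 ≤ νG)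
    (hνG : cvar α G = νG - α⁻¹ * ∫ y in (0:ℝ)..νG, G y) (hνGν : νG ≤ ν) :
    cvar α G - cvar α F ≤ α⁻¹ * ∫ y in (0:ℝ)..ν, |G y - F y| := by
  have hdiff_int : ∀ a b, IntervalIntegrable (fun y => |G y - F y|) volume a b :=
    fun a b => ((hG.intervalIntegrable a b).sub (hF.intervalIntegrable a b)).abs
  have hdiff : (∫ y in (0:ℝ)..νG, F y) - ∫ y in (0:ℝ)..νG, G y
      ≤ ∫ y in (0:ℝ)..ν, |G y - F y| :=
    calc (∫ y in (0:ℝ)..νG, F y) - ∫ y in (0:ℝ)..νG, G y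
        = ∫ y in (0:ℝ)..νG, (F y - G y) :=
          (intervalIntegral.integral_sub (hF.intervalIntegrable 0 νG)
            (hG.intervalIntegrable 0 νG)).symm
      _ ≤ ∫ y in (0:ℝ)..νG, |G y - F y| :=
          intervalIntegral.integral_mono_on hνG0
            ((hF.intervalIntegrable 0 νG).sub (hG.intervalIntegrable 0 νG)) (hdiff_int 0 νG)
            fun y _ => (le_abs_self _).trans_eq (abs_sub_comm _ _)
      _ ≤ ∫ y in (0:ℝ)..ν, |G y - F y| :=
          intervalIntegral.integral_mono_interval le_rfl hνG0 hνGν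
            (Filter.Eventually.of_forall fun y => abs_nonneg _) (hdiff_int 0 ν)
  have hα0 : 0 ≤ α⁻¹ := inv_nonneg.2 hα.1.le
  rw [hνG]
  linarith [le_cvar hF hα νG, mul_le_mul_of_nonneg_left hdiff hα0]

end cvar

theorem cvar_diff_le_l1 (F G : ℝ → ℝ)
    (hF : IsBoundedNonnegCDF F) (hG : IsBoundedNonnegCDF G)
    (α : ℝ) (hα : α ∈ Set.Ioc (0:ℝ) 1)
    (νF νG : ℝ) (hνF0 : 0 ≤ νF) (hνG0 : 0 ≤ νG)
    (hνF : cvar α F = νF - α⁻¹ * ∫ y in (0:ℝ)..νF, F y)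
    (hνG : cvar α G = νG - α⁻¹ * ∫ y in (0:ℝ)..νG, G y) :
    |cvar α F - cvar α G| ≤ α⁻¹ * ∫ y in (0:ℝ)..(max νF νG), |G y - F y| := by
  rw [abs_sub_le_iff]
  constructor
  · simpa only [abs_sub_comm (F _)] using cvar_sub_cvar_le hG hF hα hνF0 hνF (le_max_left νF νG)
  · exact cvar_sub_cvar_le hF hG hα hνG0 hνG (le_max_right νF νG)
end

section
/- Let F and G be CDFs of random variables supported on [0, Vmax] with F(x) ≥ G(x) for all x, and let α ∈ (0,1]. Then 0 ≤ CVaR_α(G) - CVaR_α(F) ≤ (Vmax/α) · sup_x (F(x) - G(x)). -/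
open MeasureTheory

/-!
The Rockafellar–Uryasev objectives of `G` and `F` differ by `α⁻¹ ∫₀^ν (F - G)`. Since `F ≥ G`
this is nonnegative, and since `F - G` vanishes outside `[0, Vmax)` it is at most
`α⁻¹ Vmax sup (F - G)`. Both objectives are bounded above by `Vmax` (this is where `α ≤ 1`
enters), so the pointwise bounds pass to the suprema.
-/

open Set intervalIntegral

lemma ciSup_sub_ciSup_mem_Icc {ι : Type*} [Nonempty ι] {f g : ι → ℝ}
    (hf : BddAbove (range f)) (hg : BddAbove (range g)) {c : ℝ}
    (h : ∀ i, g i - f i ∈ Icc 0 c) : (⨆ i, g i) - (⨆ i, f i) ∈ Icc 0 c := by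
  have hfg : (⨆ i, f i) ≤ ⨆ i, g i :=
    ciSup_le fun i => (sub_nonneg.1 (h i).1).trans (le_ciSup hg i)
  have hgf : (⨆ i, g i) ≤ (⨆ i, f i) + c :=
    ciSup_le fun i => (sub_le_iff_le_add'.1 (h i).2).trans (by gcongr; exact le_ciSup hf i)
  exact ⟨sub_nonneg.2 hfg, sub_le_iff_le_add'.2 hgf⟩

section IntervalIntegral

variable {d : ℝ → ℝ}

lemma integral_eq_zero_of_eq_zero_of_neg (h0 : ∀ x < 0, d x = 0) {ν : ℝ} (hν : ν ≤ 0) :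
    ∫ y in (0:ℝ)..ν, d y = 0 := by
  refine integral_zero_ae ((Measure.ae_ne volume 0).mono fun x hx0 hx => h0 x ?_)
  rw [uIoc_of_ge hν] at hx
  exact lt_of_le_of_ne hx.2 hx0

lemma integral_nonneg_of_eq_zero_of_neg (hd : ∀ x, 0 ≤ d x) (h0 : ∀ x < 0, d x = 0)
    (ν : ℝ) : 0 ≤ ∫ y in (0:ℝ)..ν, d y := by
  rcases le_total 0 ν with hν | hν
  · exact integral_nonneg hν fun x _ => hd x
  · exact (integral_eq_zero_of_eq_zero_of_neg h0 hν).ge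

lemma integral_eq_of_eq_const_of_ge {V c ν : ℝ} (h : ∀ x ≥ V, d x = c) (hν : V ≤ ν) :
    ∫ y in V..ν, d y = (ν - V) * c := by
  rw [integral_congr (g := fun _ => c) fun x hx => h x (by rw [uIcc_of_le hν] at hx; exact hx.1)]
  simp

lemma integral_le_mul_of_eq_zero_outside {V D : ℝ} (hV : 0 ≤ V) (hD : 0 ≤ D)
    (hint : ∀ a b, IntervalIntegrable d volume a b) (h0 : ∀ x < 0, d x = 0)
    (hV0 : ∀ x ≥ V, d x = 0) (hdD : ∀ x, d x ≤ D) (ν : ℝ) :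
    ∫ y in (0:ℝ)..ν, d y ≤ V * D := by
  have hle : ∀ b, 0 ≤ b → b ≤ V → ∫ y in (0:ℝ)..b, d y ≤ V * D := fun b hb hbV =>
    calc ∫ y in (0:ℝ)..b, d y ≤ ∫ _ in (0:ℝ)..b, D :=
          integral_mono_on hb (hint 0 b) intervalIntegrable_const fun x _ => hdD x
      _ = b * D := by simp
      _ ≤ V * D := by gcongr
  rcases le_total ν 0 with hν | hν
  · rw [integral_eq_zero_of_eq_zero_of_neg h0 hν]; positivity
  rcases le_total ν V with hνV | hνV
  · exact hle ν hν hνV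
  · rw [← integral_add_adjacent_intervals (hint 0 V) (hint V ν),
      integral_eq_of_eq_const_of_ge hV0 hνV, mul_zero, add_zero]
    exact hle V hV le_rfl

end IntervalIntegral

noncomputable def cvarObjective (α : ℝ) (F : ℝ → ℝ) (ν : ℝ) : ℝ :=
  ν - α⁻¹ * ∫ y in (0:ℝ)..ν, F y

lemma cvar_eq_iSup_cvarObjective (α : ℝ) (F : ℝ → ℝ) : cvar α F = ⨆ ν, cvarObjective α F ν := rfl

lemma cvarObjective_sub_cvarObjective {F G : ℝ → ℝ} (hF : Monotone F) (hG : Monotone G)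
    (α ν : ℝ) :
    cvarObjective α G ν - cvarObjective α F ν = α⁻¹ * ∫ y in (0:ℝ)..ν, (F y - G y) := by
  rw [integral_sub hF.intervalIntegrable hG.intervalIntegrable]
  unfold cvarObjective
  ring

lemma cvarObjective_le {H : ℝ → ℝ} (hH : IsBoundedNonnegCDF H) {V : ℝ}
    (hV : ∀ x ≥ V, H x = 1) {α : ℝ} (hα : α ∈ Ioc 0 1) (ν : ℝ) : cvarObjective α H ν ≤ V := by
  obtain ⟨hHm, hHbd, hH0, -⟩ := hH
  have hnonneg : ∀ b, 0 ≤ ∫ y in (0:ℝ)..b, H y :=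
    integral_nonneg_of_eq_zero_of_neg (fun x => (hHbd x).1) hH0
  have hinv : 1 ≤ α⁻¹ := (one_le_inv₀ hα.1).2 hα.2
  unfold cvarObjective
  rcases le_total ν V with hνV | hνV
  · nlinarith [hnonneg ν]
  · have htail : ν - V ≤ ∫ y in (0:ℝ)..ν, H y := by
      rw [← integral_add_adjacent_intervals hHm.intervalIntegrable hHm.intervalIntegrable,
        integral_eq_of_eq_const_of_ge hV hνV, mul_one]
      linarith [hnonneg V]
    nlinarith [hnonneg ν]

lemma bddAbove_range_cvarObjective {H : ℝ → ℝ} (hH : IsBoundedNonnegCDF H) {V : ℝ}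
    (hV : ∀ x ≥ V, H x = 1) {α : ℝ} (hα : α ∈ Ioc 0 1) :
    BddAbove (range (cvarObjective α H)) :=
  ⟨V, forall_mem_range.2 (cvarObjective_le hH hV hα)⟩

theorem cvar_stochdom_bounds (Vmax : ℝ) (hVmax : 0 ≤ Vmax)
    (F G : ℝ → ℝ) (hF : IsBoundedNonnegCDF F) (hG : IsBoundedNonnegCDF G)
    (hFsupp : ∀ x ≥ Vmax, F x = 1) (hGsupp : ∀ x ≥ Vmax, G x = 1)
    (hdom : ∀ x, G x ≤ F x)
    (α : ℝ) (hα : α ∈ Set.Ioc (0:ℝ) 1) :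
    0 ≤ cvar α G - cvar α F ∧
      cvar α G - cvar α F ≤ (Vmax / α) * ⨆ x : ℝ, (F x - G x) := by
  have hbddF := bddAbove_range_cvarObjective hF hFsupp hα
  have hbddG := bddAbove_range_cvarObjective hG hGsupp hα
  obtain ⟨hFm, hFbd, hF0, -⟩ := hF
  obtain ⟨hGm, hGbd, hG0, -⟩ := hG
  have hgap_neg : ∀ x < 0, F x - G x = 0 := fun x hx => by rw [hF0 x hx, hG0 x hx, sub_self]
  have hgap_ge : ∀ x ≥ Vmax, F x - G x = 0 := fun x hx => by
    rw [hFsupp x hx, hGsupp x hx, sub_self]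
  have hgap : ∀ x, F x - G x ≤ ⨆ x, (F x - G x) :=
    le_ciSup ⟨1, forall_mem_range.2 fun x => by linarith [(hFbd x).2, (hGbd x).1]⟩
  have hgap_nonneg : 0 ≤ ⨆ x, (F x - G x) := (sub_nonneg.2 (hdom 0)).trans (hgap 0)
  rw [cvar_eq_iSup_cvarObjective, cvar_eq_iSup_cvarObjective]
  refine ciSup_sub_ciSup_mem_Icc hbddF hbddG fun ν => ?_
  rw [cvarObjective_sub_cvarObjective hFm hGm, div_eq_inv_mul, mul_assoc]
  have hα_inv : 0 ≤ α⁻¹ := inv_nonneg.2 hα.1.le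
  refine ⟨mul_nonneg hα_inv ?_, mul_le_mul_of_nonneg_left ?_ hα_inv⟩
  · exact integral_nonneg_of_eq_zero_of_neg (fun x => sub_nonneg.2 (hdom x)) hgap_neg ν
  · exact integral_le_mul_of_eq_zero_outside hVmax hgap_nonneg
      (fun _ _ => hFm.intervalIntegrable.sub hGm.intervalIntegrable) hgap_neg hgap_ge hgap ν
end
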